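/- The polynomial P₈₀(z) = (1 − z)¹⁰ − (75/8)(1 − z)⁷ z² + (42525/2048)(1 − z)⁴ z⁴ − (202125/32768)(1 − z) z⁶ is strictly decreasing on the interval [0, 1/4]; in particular its derivative is negative for all z in [0, 1/4]. -/

import Mathlib

/-! The derivative of `P80` is a polynomial of degree 9. On `[0, 1/4]` each odd power `z ^ k`
with `k ≥ 3` is at most `z ^ 2 / 4 ^ (k - 2)`, and the negative even terms can be dropped; this
bounds the derivative by the quadratic `-10 + 285/4 z - 129 z ^ 2`, whose discriminant is
negative. -/

/-- Denominator polynomial of the secrecy function of the extremal even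
unimodular lattice in dimension 80. -/
noncomputable def P80 (z : ℝ) : ℝ :=
  (1 - z) ^ 10 - 75 / 8 * (1 - z) ^ 7 * z ^ 2 + 42525 / 2048 * (1 - z) ^ 4 * z ^ 4
    - 202125 / 32768 * (1 - z) * z ^ 6

noncomputable def derivP80 (z : ℝ) : ℝ :=
  -10 + 285 / 4 * z - 1305 / 8 * z ^ 2 + 69405 / 512 * z ^ 3 - 17745 / 512 * z ^ 4
    + 28665 / 16384 * z ^ 5 - 3045 / 32768 * z ^ 6 + 285 / 256 * z ^ 7 - 45 / 8 * z ^ 8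
    + 10 * z ^ 9

lemma hasDerivAt_P80 (z : ℝ) : HasDerivAt P80 (derivP80 z) z := by
  have hu : HasDerivAt (fun z : ℝ => 1 - z) (-1) z := (hasDerivAt_id z).const_sub 1
  have t1 := hu.pow 10
  have t2 := ((hu.pow 7).const_mul (75 / 8 : ℝ)).mul (hasDerivAt_pow 2 z)
  have t3 := ((hu.pow 4).const_mul (42525 / 2048 : ℝ)).mul (hasDerivAt_pow 4 z)
  have t4 := (hu.const_mul (202125 / 32768 : ℝ)).mul (hasDerivAt_pow 6 z)
  have h : HasDerivAt P80 _ z := ((t1.sub t2).add t3).sub t4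
  convert h using 1
  simp only [derivP80, Pi.pow_apply]
  ring

lemma pow_add_le_pow_mul_pow_of_le {R : Type*} [Semiring R] [PartialOrder R] [IsOrderedRing R]
    {z c : R} (hz : 0 ≤ z) (hzc : z ≤ c) (m n : ℕ) : z ^ (m + n) ≤ z ^ m * c ^ n := by
  rw [pow_add]
  exact mul_le_mul_of_nonneg_left (pow_le_pow_left₀ hz hzc n) (pow_nonneg hz m)

lemma derivP80_neg {z : ℝ} (h0 : 0 ≤ z) (h1 : z ≤ 1 / 4) : derivP80 z < 0 := by
  have h3 : z ^ 3 ≤ z ^ 2 * (1 / 4) ^ 1 := pow_add_le_pow_mul_pow_of_le h0 h1 2 1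
  have h5 : z ^ 5 ≤ z ^ 2 * (1 / 4) ^ 3 := pow_add_le_pow_mul_pow_of_le h0 h1 2 3
  have h7 : z ^ 7 ≤ z ^ 2 * (1 / 4) ^ 5 := pow_add_le_pow_mul_pow_of_le h0 h1 2 5
  have h9 : z ^ 9 ≤ z ^ 2 * (1 / 4) ^ 7 := pow_add_le_pow_mul_pow_of_le h0 h1 2 7
  have hquad : derivP80 z ≤ -10 + 285 / 4 * z - 129 * z ^ 2 := by
    simp only [derivP80]
    linarith [pow_nonneg h0 2, pow_nonneg h0 4, pow_nonneg h0 6, pow_nonneg h0 8]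
  nlinarith [sq_nonneg (z - 285 / 1032)]

theorem P80_strictAnti :
    StrictAntiOn P80 (Set.Icc (0 : ℝ) (1 / 4)) ∧
      ∀ z ∈ Set.Icc (0 : ℝ) (1 / 4), deriv P80 z < 0 := by
  have hneg : ∀ z ∈ Set.Icc (0 : ℝ) (1 / 4), deriv P80 z < 0 := fun z hz => by
    rw [(hasDerivAt_P80 z).deriv]
    exact derivP80_neg hz.1 hz.2
  refine ⟨strictAntiOn_of_deriv_neg (convex_Icc _ _) ?_ ?_, hneg⟩
  · exact HasDerivAt.continuousOn fun z _ => hasDerivAt_P80 z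
  · exact fun z hz => hneg z (interior_subset hz)
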